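/- Suppose Assumption 1 (full rank) and Assumption 2 (no separation) hold. Then there exist real coefficients c_{i,d} ≥ 1 (one for each pair (i,d) with i ∈ {1,…,n} and d ∈ B_i) such that ∑_{i=1}^n ∑_{d∈B_i} c_{i,d} v_{i,d} = 0; in particular the minimum of u'u over all u of the form u = ∑_{i,d} c_{i,d} v_{i,d} with c_{i,d} ≥ 1 equals zero. (The other direction of Theorem 2.) -/

import Mathlib

open scoped BigOperators RealInnerProductSpace

noncomputable section

/-- Real value of a binary indicator. -/
def bval (b : Bool) : ℝ := if b then 1 else 0

/-- The alternative set `B_i = {d ∈ {0,1}^T : ∑_t d_t = ∑_t Y_{it}}`. -/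
def altSet (T : ℕ) (Yi : Fin T → Bool) : Finset (Fin T → Bool) :=
  Finset.univ.filter fun d => (∑ t, (d t).toNat) = ∑ t, (Yi t).toNat

/-- The conditional log-likelihood `log L(β)`. -/
def logL {n T p : ℕ} (X : Fin n → Fin T → EuclideanSpace ℝ (Fin p))
    (Y : Fin n → Fin T → Bool) (β : EuclideanSpace ℝ (Fin p)) : ℝ :=
  ∑ i, ((∑ t, bval (Y i t) * ⟪X i t, β⟫) -
    Real.log (∑ d ∈ altSet T (Y i), Real.exp (∑ t, bval (d t) * ⟪X i t, β⟫)))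

/-- The conditional-logit (softmax) weights `w_i(d; β)`. -/
def cweight {n T p : ℕ} (X : Fin n → Fin T → EuclideanSpace ℝ (Fin p))
    (Y : Fin n → Fin T → Bool) (i : Fin n) (d : Fin T → Bool)
    (β : EuclideanSpace ℝ (Fin p)) : ℝ :=
  Real.exp (∑ t, bval (d t) * ⟪X i t, β⟫) /
    ∑ f ∈ altSet T (Y i), Real.exp (∑ t, bval (f t) * ⟪X i t, β⟫)

/-- Row index set of the matrix in Assumption 1: pairs `(i, d)` with `d ∈ B_i`. -/
abbrev RowIdx (n T : ℕ) (Y : Fin n → Fin T → Bool) :=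
  (i : Fin n) × {d : Fin T → Bool // d ∈ altSet T (Y i)}

/-- The matrix of Assumption 1, evaluated at `β`. -/
def rowMat {n T p : ℕ} (X : Fin n → Fin T → EuclideanSpace ℝ (Fin p))
    (Y : Fin n → Fin T → Bool) (β : EuclideanSpace ℝ (Fin p)) :
    Matrix (RowIdx n T Y) (Fin p) ℝ :=
  fun r k =>
    (∑ t, bval (r.2.1 t) * X r.1 t k) -
      ∑ e ∈ altSet T (Y r.1),
        cweight X Y r.1 e β * ∑ t, bval (e t) * X r.1 t k

/-- Assumption 1 (full rank). -/
def Assumption1 {n T p : ℕ} (X : Fin n → Fin T → EuclideanSpace ℝ (Fin p))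
    (Y : Fin n → Fin T → Bool) : Prop :=
  ∀ β : EuclideanSpace ℝ (Fin p), (rowMat X Y β).rank = p

/-- Assumption 2 (no separation). -/
def Assumption2 {n T p : ℕ} (X : Fin n → Fin T → EuclideanSpace ℝ (Fin p))
    (Y : Fin n → Fin T → Bool) : Prop :=
  ¬ ∃ βstar : EuclideanSpace ℝ (Fin p), βstar ≠ 0 ∧
      ∀ i, ∀ d ∈ altSet T (Y i),
        0 ≤ ∑ t, (bval (d t) - bval (Y i t)) * ⟪X i t, βstar⟫

/-- The vectors `v_{i,d} = ∑_t (d_t − Y_{it}) X_{it}`. -/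
def vvec {n T p : ℕ} (X : Fin n → Fin T → EuclideanSpace ℝ (Fin p))
    (Y : Fin n → Fin T → Bool) (i : Fin n) (d : Fin T → Bool) :
    EuclideanSpace ℝ (Fin p) :=
  ∑ t, (bval (d t) - bval (Y i t)) • X i t

/-! No separation says that the inner dual of the cone generated by the `v_{i,d}` is `{0}`.
By Farkas' lemma the cone is then dense, and a dense convex set in a finite-dimensional space
is the whole space. So `-∑ v_{i,d} = ∑ a_{i,d} v_{i,d}` with `a ≥ 0`, and `c = a + 1` works. -/

open Set

section Cone

variable {E : Type*} [NormedAddCommGroup E] [InnerProductSpace ℝ E] [FiniteDimensional ℝ E]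

theorem Convex.eq_univ_of_dense {s : Set E} (hs : Convex ℝ s) (hd : Dense s) : s = univ := by
  have hspan : affineSpan ℝ s = ⊤ := by
    refine SetLike.coe_injective ?_
    rw [AffineSubspace.top_coe, ← (affineSpan ℝ s).closed_of_finiteDimensional.closure_eq]
    exact (hd.mono (subset_affineSpan ℝ s)).closure_eq
  have hint : interior s = univ := by
    rw [← hs.interior_closure_eq_interior_of_nonempty_interior
      (hs.interior_nonempty_iff_affineSpan_eq_top.2 hspan), hd.closure_eq, interior_univ]
  exact eq_univ_of_univ_subset (hint ▸ interior_subset)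

theorem PointedCone.hull_range_eq_top_of_forall_exists_inner_neg {ι : Type*} (v : ι → E)
    (h : ∀ β ≠ 0, ∃ j, ⟪v j, β⟫ < 0) : PointedCone.hull ℝ (range v) = ⊤ := by
  set K := PointedCone.hull ℝ (range v)
  have hdense : Dense (K : Set E) := by
    refine dense_iff_closure_eq.2 (eq_univ_of_forall fun x ↦ ?_)
    by_contra hx
    obtain ⟨β, hβK, hxβ⟩ := ProperCone.hyperplane_separation' (Submodule.closure K) (x₀ := x) hx
    obtain ⟨j, hj⟩ := h β (by rintro rfl; simp at hxβ)
    have := hβK (v j) (subset_closure (PointedCone.subset_hull (mem_range_self j)))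
    linarith
  exact SetLike.coe_injective (K.convex.eq_univ_of_dense hdense)

theorem exists_one_le_sum_smul_eq_zero_of_forall_exists_inner_neg {ι : Type*} [Fintype ι]
    (v : ι → E) (h : ∀ β ≠ 0, ∃ j, ⟪v j, β⟫ < 0) :
    ∃ c : ι → ℝ, (∀ j, 1 ≤ c j) ∧ ∑ j, c j • v j = 0 := by
  have hmem : -∑ j, v j ∈ PointedCone.hull ℝ (range v) := by
    rw [PointedCone.hull_range_eq_top_of_forall_exists_inner_neg v h]; trivial
  obtain ⟨a, ha⟩ := (Submodule.mem_span_range_iff_exists_fun _).1 hmem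
  refine ⟨fun j ↦ a j + 1, fun j ↦ le_add_of_nonneg_left (a j).2, ?_⟩
  simp only [add_smul, one_smul, Finset.sum_add_distrib]
  change ∑ j, a j • v j + _ = 0
  rw [ha, neg_add_cancel]

end Cone

theorem inner_vvec {n T p : ℕ} (X : Fin n → Fin T → EuclideanSpace ℝ (Fin p))
    (Y : Fin n → Fin T → Bool) (i : Fin n) (d : Fin T → Bool) (β : EuclideanSpace ℝ (Fin p)) :
    ⟪vvec X Y i d, β⟫ = ∑ t, (bval (d t) - bval (Y i t)) * ⟪X i t, β⟫ := by
  simp only [vvec, sum_inner, real_inner_smul_left]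

theorem Assumption2.exists_inner_vvec_neg {n T p : ℕ}
    {X : Fin n → Fin T → EuclideanSpace ℝ (Fin p)} {Y : Fin n → Fin T → Bool}
    (h : Assumption2 X Y) (β : EuclideanSpace ℝ (Fin p)) (hβ : β ≠ 0) :
    ∃ j : RowIdx n T Y, ⟪vvec X Y j.1 j.2.1, β⟫ < 0 := by
  by_contra! hno
  exact h ⟨β, hβ, fun i d hd ↦ inner_vvec X Y i d β ▸ hno ⟨i, d, hd⟩⟩

theorem stmt5_general {n T p : ℕ}
    (X : Fin n → Fin T → EuclideanSpace ℝ (Fin p)) (Y : Fin n → Fin T → Bool)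
    (h2 : Assumption2 X Y) :
    (∃ c : RowIdx n T Y → ℝ, (∀ j, 1 ≤ c j) ∧
      ∑ j : RowIdx n T Y, c j • vvec X Y j.1 j.2.1 = 0) ∧
    sInf {r : ℝ | ∃ c : RowIdx n T Y → ℝ, (∀ j, 1 ≤ c j) ∧
      r = ‖∑ j : RowIdx n T Y, c j • vvec X Y j.1 j.2.1‖ ^ 2} = 0 := by
  obtain ⟨c, hc, hsum⟩ := exists_one_le_sum_smul_eq_zero_of_forall_exists_inner_neg
    (fun j : RowIdx n T Y ↦ vvec X Y j.1 j.2.1) h2.exists_inner_vvec_neg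
  refine ⟨⟨c, hc, hsum⟩, IsLeast.csInf_eq ⟨⟨c, hc, by rw [hsum, norm_zero]; norm_num⟩, ?_⟩⟩
  rintro r ⟨c', -, rfl⟩
  positivity

/-- The other direction of Theorem 2: full rank and no separation yield coefficients
`c_{i,d} ≥ 1` with `∑ c_{i,d} v_{i,d} = 0`, hence the minimum of the quadratic program is zero. -/
theorem stmt5 {n T p : ℕ} (hn : 1 ≤ n) (hT : 1 ≤ T) (hp : 1 ≤ p)
    (X : Fin n → Fin T → EuclideanSpace ℝ (Fin p)) (Y : Fin n → Fin T → Bool)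
    (h1 : Assumption1 X Y) (h2 : Assumption2 X Y) :
    (∃ c : RowIdx n T Y → ℝ, (∀ j, 1 ≤ c j) ∧
      ∑ j : RowIdx n T Y, c j • vvec X Y j.1 j.2.1 = 0) ∧
    sInf {r : ℝ | ∃ c : RowIdx n T Y → ℝ, (∀ j, 1 ≤ c j) ∧
      r = ‖∑ j : RowIdx n T Y, c j • vvec X Y j.1 j.2.1‖ ^ 2} = 0 :=
  stmt5_general X Y h2
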